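/- Decomposition of the entropy increment for the CPIC method: work in phase space ℝ^{d_x} × ℝ^{d_v} with separable even C¹ kernel K(x,v) = ψ(x)φ(v) (ψ, φ even, nonnegative, C¹), weights w_p ≥ 0, and differentiable trajectories (x_p(t), v_p(t)) satisfying ẋ_p = v_p and v̇_p = F_p − U_p, where F_p ∈ ℝ^{d_v} is arbitrary (the Lorentz force at particle p) and U_p = Σ_q w_q ψ(x_p − x_q) A(v_p − v_q)(G_p − G_q) with G_p = (Σ_q w_q ψ(x_p − x_q)∇φ(v_p − v_q))/f̃_p + Σ_q w_q ψ(x_p − x_q)∇φ(v_p − v_q)/f̃_q and f̃_p = Σ_q w_q ψ(x_p − x_q)φ(v_p − v_q) > 0. Then the regularised entropy S(t) = −Σ_p w_p log f̃_p satisfies dS/dt = C_x + C_v + D, where C_x = −Σ_p w_p H_p · v_p with H_p = (Σ_q w_q ∇ψ(x_p − x_q)φ(v_p − v_q))/f̃_p + Σ_q w_q ∇ψ(x_p − x_q)φ(v_p − v_q)/f̃_q, C_v = −Σ_p w_p G_p · F_p, and D = Σ_p w_p G_p · U_p = (1/2)Σ_{p,q} w_p w_q ψ(x_p − x_q)(G_p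 − G_q)·A(v_p − v_q)(G_p − G_q) ≥ 0. -/

import Mathlib

open Matrix
open scoped Classical

/-- The Landau collision kernel `A(z) = C ‖z‖^(γ+2) (I − z zᵀ/‖z‖²)` for `z ≠ 0`,
with the convention `A(0) = 0`. -/
noncomputable def landauA (d : ℕ) (C γ : ℝ) (z : Fin d → ℝ) :
    Matrix (Fin d) (Fin d) ℝ :=
  if z = 0 then 0
  else (C * Real.sqrt (z ⬝ᵥ z) ^ (γ + 2)) •
    (1 - (z ⬝ᵥ z)⁻¹ • Matrix.vecMulVec z z)

/-- The gradient of a function `f : ℝ^n → ℝ`, with coordinates given by the partial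
derivatives of `f`. -/
noncomputable def pgrad {n : ℕ} (f : (Fin n → ℝ) → ℝ) (y : Fin n → ℝ) : Fin n → ℝ :=
  fun i => fderiv ℝ f y (Pi.single i 1)

/-!
Differentiating `log f̃_p` along the flow gives double sums
`Σ_{p,q} w_p w_q s_pq g_pq · (y_p − y_q) / f̃_p` with `s` symmetric and `g` antisymmetric
(`φ ∇ψ` with `y = v`, and `ψ ∇φ` with `y = F − U`; the gradient of an even function is odd).
Exchanging `p` and `q` in the `y_q` half turns such a sum into `Σ_p w_p X_p · y_p`, with `X = H`
and `X = G` respectively. The same exchange, with `A` and `ψ` even, symmetrises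
`Σ_p w_p G_p · U_p` into `½ Σ_{p,q} w_p w_q ψ (G_p − G_q) · A (G_p − G_q)`, which is nonnegative
since `A(z)` is a nonnegative multiple of an orthogonal projection (Cauchy–Schwarz).
-/

theorem landauA_neg (d : ℕ) (C γ : ℝ) (z : Fin d → ℝ) :
    landauA d C γ (-z) = landauA d C γ z := by
  simp [landauA]

theorem dotProduct_landauA_mulVec_self_nonneg {d : ℕ} {C : ℝ} (hC : 0 ≤ C) (γ : ℝ)
    (z u : Fin d → ℝ) : 0 ≤ u ⬝ᵥ landauA d C γ z *ᵥ u := by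
  unfold landauA
  split_ifs with hz
  · simp
  have hzz : 0 < z ⬝ᵥ z := by
    simpa using (dotProduct_self_star_pos_iff (v := z)).2 hz
  have hcs : (z ⬝ᵥ u) ^ 2 ≤ (z ⬝ᵥ z) * (u ⬝ᵥ u) := by
    simpa [dotProduct, pow_two] using Finset.sum_mul_sq_le_sq_mul_sq Finset.univ z u
  rw [smul_mulVec, sub_mulVec, one_mulVec, smul_mulVec, vecMulVec_mulVec, dotProduct_smul,
    dotProduct_sub, dotProduct_smul, op_smul_eq_smul, dotProduct_smul, smul_eq_mul,
    smul_eq_mul, smul_eq_mul, dotProduct_comm u z]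
  refine mul_nonneg (mul_nonneg hC (Real.rpow_nonneg (Real.sqrt_nonneg _) _)) ?_
  rw [sub_nonneg, inv_mul_le_iff₀ hzz]
  nlinarith

theorem fderiv_apply_eq_pgrad_dotProduct {n : ℕ} (f : (Fin n → ℝ) → ℝ) (y u : Fin n → ℝ) :
    fderiv ℝ f y u = pgrad f y ⬝ᵥ u := by
  have h := (fderiv ℝ f y : (Fin n → ℝ) →ₗ[ℝ] ℝ).pi_apply_eq_sum_univ u
  simp only [ContinuousLinearMap.coe_coe, smul_eq_mul] at h
  rw [h, dotProduct]
  refine Finset.sum_congr rfl fun i _ => ?_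
  rw [mul_comm, pgrad]
  congr 2
  ext j
  simp [Pi.single_apply, eq_comm]

theorem pgrad_neg_of_even {n : ℕ} {f : (Fin n → ℝ) → ℝ} (hf : ∀ y, f (-y) = f y)
    (y : Fin n → ℝ) : pgrad f (-y) = -pgrad f y := by
  have hcomp : f ∘ ContinuousLinearEquiv.neg ℝ = f := funext fun z => hf z
  have h := (ContinuousLinearEquiv.neg ℝ).comp_right_fderiv (f := f) (x := -y)
  rw [hcomp] at h
  ext i
  simp [pgrad, h]

theorem HasDerivAt.pgrad_comp {n : ℕ} {f : (Fin n → ℝ) → ℝ} {X : ℝ → Fin n → ℝ}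
    {X' : Fin n → ℝ} {t : ℝ} (hf : DifferentiableAt ℝ f (X t)) (hX : HasDerivAt X X' t) :
    HasDerivAt (fun s => f (X s)) (pgrad f (X t) ⬝ᵥ X') t := by
  rw [← fderiv_apply_eq_pgrad_dotProduct]
  exact hf.hasFDerivAt.comp_hasDerivAt t hX

section Particles

variable {ι : Type*} [Fintype ι]

theorem hasDerivAt_sum_mul_kernel {d : ℕ} {ψ φ : (Fin d → ℝ) → ℝ}
    (hψ : Differentiable ℝ ψ) (hφ : Differentiable ℝ φ) (w : ι → ℝ)
    {x v : ι → ℝ → Fin d → ℝ} {x' v' : ι → Fin d → ℝ} {t : ℝ}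
    (hx : ∀ q, HasDerivAt (x q) (x' q) t) (hv : ∀ q, HasDerivAt (v q) (v' q) t) (p : ι) :
    HasDerivAt (fun s => ∑ q, w q * (ψ (x p s - x q s) * φ (v p s - v q s)))
      (∑ q, w q * (φ (v p t - v q t) * (pgrad ψ (x p t - x q t) ⬝ᵥ (x' p - x' q))) +
        ∑ q, w q * (ψ (x p t - x q t) * (pgrad φ (v p t - v q t) ⬝ᵥ (v' p - v' q)))) t := by
  rw [← Finset.sum_add_distrib]
  refine HasDerivAt.fun_sum fun q _ => ?_
  have hψ' := ((hx p).fun_sub (hx q)).pgrad_comp (hψ (x p t - x q t))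
  have hφ' := ((hv p).fun_sub (hv q)).pgrad_comp (hφ (v p t - v q t))
  exact ((hψ'.mul hφ').const_mul (w q)).congr_deriv (by ring)

theorem hasDerivAt_neg_sum_mul_log (w : ι → ℝ) {f : ι → ℝ → ℝ} {f' : ι → ℝ} {t : ℝ}
    (hf : ∀ p, HasDerivAt (f p) (f' p) t) (hf0 : ∀ p, f p t ≠ 0) :
    HasDerivAt (fun s => -∑ p, w p * Real.log (f p s)) (-∑ p, w p * (f' p / f p t)) t :=
  (HasDerivAt.fun_sum fun p _ => ((hf p).log (hf0 p)).const_mul (w p)).neg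

theorem sum_sum_eq_half_sum_sum_add_swap (f : ι → ι → ℝ) :
    ∑ p, ∑ q, f p q = 1 / 2 * ∑ p, ∑ q, (f p q + f q p) := by
  simp only [Finset.sum_add_distrib]
  rw [Finset.sum_comm (f := fun p q => f q p)]
  ring

variable {n : Type*} [Fintype n]

theorem sum_mul_div_sum_dotProduct_sub (w f : ι → ℝ) {s : ι → ι → ℝ} {g : ι → ι → n → ℝ}
    (hs : ∀ p q, s q p = s p q) (hg : ∀ p q, g q p = -g p q) (y : ι → n → ℝ) :
    ∑ p, w p * ((∑ q, w q * (s p q * (g p q ⬝ᵥ (y p - y q)))) / f p) =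
      ∑ p, w p * (((f p)⁻¹ • ∑ q, (w q * s p q) • g p q +
        ∑ q, (w q * s p q / f q) • g p q) ⬝ᵥ y p) := by
  have hswap : ∑ p, ∑ q, w p * w q * s p q * (g p q ⬝ᵥ y q) / f p =
      -∑ p, ∑ q, w p * w q * s p q * (g p q ⬝ᵥ y p) / f q := by
    rw [Finset.sum_comm, ← Finset.sum_neg_distrib]
    refine Finset.sum_congr rfl fun p _ => ?_
    rw [← Finset.sum_neg_distrib]
    refine Finset.sum_congr rfl fun q _ => ?_
    rw [hs, hg, neg_dotProduct]
    ring
  have hlhs : ∑ p, w p * ((∑ q, w q * (s p q * (g p q ⬝ᵥ (y p - y q)))) / f p) =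
      ∑ p, ∑ q, w p * w q * s p q * (g p q ⬝ᵥ y p) / f p -
        ∑ p, ∑ q, w p * w q * s p q * (g p q ⬝ᵥ y q) / f p := by
    simp only [← Finset.sum_sub_distrib, Finset.sum_div, Finset.mul_sum, dotProduct_sub]
    refine Finset.sum_congr rfl fun p _ => Finset.sum_congr rfl fun q _ => ?_
    ring
  have hrhs : ∑ p, w p * (((f p)⁻¹ • ∑ q, (w q * s p q) • g p q +
        ∑ q, (w q * s p q / f q) • g p q) ⬝ᵥ y p) =
      ∑ p, ∑ q, w p * w q * s p q * (g p q ⬝ᵥ y p) / f p +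
        ∑ p, ∑ q, w p * w q * s p q * (g p q ⬝ᵥ y p) / f q := by
    simp only [← Finset.sum_add_distrib, add_dotProduct, smul_dotProduct, sum_dotProduct,
      smul_eq_mul, Finset.mul_sum]
    refine Finset.sum_congr rfl fun p _ => Finset.sum_congr rfl fun q _ => ?_
    ring
  rw [hlhs, hrhs, hswap, sub_neg_eq_add]

theorem sum_mul_dotProduct_sum_smul_mulVec_sub (w : ι → ℝ) {s : ι → ι → ℝ}
    {A : ι → ι → Matrix n n ℝ} (hs : ∀ p q, s q p = s p q) (hA : ∀ p q, A q p = A p q)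
    (G : ι → n → ℝ) :
    ∑ p, w p * (G p ⬝ᵥ ∑ q, (w q * s p q) • (A p q *ᵥ (G p - G q))) =
      1 / 2 * ∑ p, ∑ q, w p * w q * s p q * ((G p - G q) ⬝ᵥ A p q *ᵥ (G p - G q)) := by
  calc ∑ p, w p * (G p ⬝ᵥ ∑ q, (w q * s p q) • (A p q *ᵥ (G p - G q)))
      = ∑ p, ∑ q, w p * (w q * s p q * (G p ⬝ᵥ A p q *ᵥ (G p - G q))) := by
        simp only [dotProduct_sum, dotProduct_smul, smul_eq_mul, Finset.mul_sum]
    _ = _ := by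
      rw [sum_sum_eq_half_sum_sum_add_swap]
      congr 1
      refine Finset.sum_congr rfl fun p _ => Finset.sum_congr rfl fun q _ => ?_
      rw [hs, hA, ← neg_sub (G p) (G q), mulVec_neg, dotProduct_neg, sub_dotProduct]
      ring

end Particles

theorem cpic_entropy_decomposition_general {d N : ℕ} (C γ : ℝ) (hC : 0 < C)
    (ψ : (Fin d → ℝ) → ℝ) (hψe : ∀ y, ψ (-y) = ψ y) (hψ0 : ∀ y, 0 ≤ ψ y)
    (hψC : ContDiff ℝ 1 ψ)
    (φ : (Fin d → ℝ) → ℝ) (hφe : ∀ y, φ (-y) = φ y)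
    (hφC : ContDiff ℝ 1 φ)
    (w : Fin N → ℝ) (hw : ∀ p, 0 ≤ w p)
    (x : Fin N → ℝ → Fin d → ℝ) (v : Fin N → ℝ → Fin d → ℝ)
    (F : Fin N → ℝ → Fin d → ℝ)
    (ft : Fin N → ℝ → ℝ)
    (hft : ∀ p t, ft p t =
      ∑ q : Fin N, w q * (ψ (x p t - x q t) * φ (v p t - v q t)))
    (hft0 : ∀ p t, 0 < ft p t)
    (G : Fin N → ℝ → Fin d → ℝ)
    (hG : ∀ p t, G p t =
      (ft p t)⁻¹ • (∑ q : Fin N, (w q * ψ (x p t - x q t)) • pgrad φ (v p t - v q t)) +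
      ∑ q : Fin N, (w q * ψ (x p t - x q t) / ft q t) • pgrad φ (v p t - v q t))
    (H : Fin N → ℝ → Fin d → ℝ)
    (hH : ∀ p t, H p t =
      (ft p t)⁻¹ • (∑ q : Fin N, (w q * φ (v p t - v q t)) • pgrad ψ (x p t - x q t)) +
      ∑ q : Fin N, (w q * φ (v p t - v q t) / ft q t) • pgrad ψ (x p t - x q t))
    (U : Fin N → ℝ → Fin d → ℝ)
    (hU : ∀ p t, U p t = ∑ q : Fin N,
      (w q * ψ (x p t - x q t)) •
        (landauA d C γ (v p t - v q t)).mulVec (G p t - G q t))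
    (hx : ∀ p t, HasDerivAt (x p) (v p t) t)
    (hv : ∀ p t, HasDerivAt (v p) (F p t - U p t) t)
    (t : ℝ) :
    HasDerivAt (fun s => -∑ p : Fin N, w p * Real.log (ft p s))
      ((-∑ p : Fin N, w p * (H p t ⬝ᵥ v p t)) +
       (-∑ p : Fin N, w p * (G p t ⬝ᵥ F p t)) +
       (∑ p : Fin N, w p * (G p t ⬝ᵥ U p t))) t ∧
    (∑ p : Fin N, w p * (G p t ⬝ᵥ U p t))
      = (1 / 2) * ∑ p : Fin N, ∑ q : Fin N,
        w p * w q * ψ (x p t - x q t) *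
          ((G p t - G q t) ⬝ᵥ
            (landauA d C γ (v p t - v q t)).mulVec (G p t - G q t)) ∧
    0 ≤ ∑ p : Fin N, w p * (G p t ⬝ᵥ U p t) := by
  have hψd : Differentiable ℝ ψ := hψC.differentiable one_ne_zero
  have hφd : Differentiable ℝ φ := hφC.differentiable one_ne_zero
  have hψs : ∀ p q, ψ (x q t - x p t) = ψ (x p t - x q t) := fun p q => by
    rw [← neg_sub, hψe]
  have hφs : ∀ p q, φ (v q t - v p t) = φ (v p t - v q t) := fun p q => by
    rw [← neg_sub, hφe]
  have hψa : ∀ p q, pgrad ψ (x q t - x p t) = -pgrad ψ (x p t - x q t) := fun p q => by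
    rw [← neg_sub, pgrad_neg_of_even hψe]
  have hφa : ∀ p q, pgrad φ (v q t - v p t) = -pgrad φ (v p t - v q t) := fun p q => by
    rw [← neg_sub, pgrad_neg_of_even hφe]
  have hAs : ∀ p q, landauA d C γ (v q t - v p t) = landauA d C γ (v p t - v q t) :=
    fun p q => by rw [← neg_sub, landauA_neg]
  have hD : ∑ p, w p * (G p t ⬝ᵥ U p t) = (1 / 2) * ∑ p, ∑ q,
      w p * w q * ψ (x p t - x q t) *
        ((G p t - G q t) ⬝ᵥ (landauA d C γ (v p t - v q t)).mulVec (G p t - G q t)) := by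
    simp only [hU]
    exact sum_mul_dotProduct_sum_smul_mulVec_sub w hψs hAs (fun p => G p t)
  have hft' := fun p =>
    (hasDerivAt_sum_mul_kernel hψd hφd w (hx · t) (hv · t) p).congr_of_eventuallyEq
      (Filter.Eventually.of_forall (hft p))
  have hHv := sum_mul_div_sum_dotProduct_sub w (fun p => ft p t) hφs hψa (fun p => v p t)
  have hGa := sum_mul_div_sum_dotProduct_sub w (fun p => ft p t) hψs hφa (fun p => F p t - U p t)
  simp only [← hH, ← hG] at hHv hGa
  refine ⟨(hasDerivAt_neg_sum_mul_log w hft' fun p => (hft0 p t).ne').congr_deriv ?_, hD, ?_⟩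
  · simp only [add_div, mul_add, Finset.sum_add_distrib]
    rw [hHv, hGa]
    simp only [dotProduct_sub, mul_sub, Finset.sum_sub_distrib]
    ring
  · rw [hD]
    refine mul_nonneg (by norm_num) (Finset.sum_nonneg fun p _ => Finset.sum_nonneg fun q _ => ?_)
    exact mul_nonneg (mul_nonneg (mul_nonneg (hw p) (hw q)) (hψ0 _))
      (dotProduct_landauA_mulVec_self_nonneg hC.le γ _ _)

/-- Decomposition of the entropy increment for the CPIC method: in phase space
`ℝ^d × ℝ^d` (positions and velocities; note `ẋ_p = v_p` forces `d_x = d_v = d`),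
with separable even nonnegative `C¹` kernel `K(x,v) = ψ(x)φ(v)`, nonnegative weights,
trajectories `ẋ_p = v_p`, `v̇_p = F_p − U_p`, and the discrete Landau collision field
`U_p`, the regularised entropy `S(t) = −Σ_p w_p log f̃_p(t)` satisfies
`dS/dt = C_x + C_v + D`, where `C_x = −Σ_p w_p H_p · v_p`, `C_v = −Σ_p w_p G_p · F_p`,
and `D = Σ_p w_p G_p · U_p
   = (1/2) Σ_{p,q} w_p w_q ψ(x_p − x_q)(G_p − G_q)·A(v_p − v_q)(G_p − G_q) ≥ 0`. -/
theorem cpic_entropy_decomposition {d N : ℕ} (C γ : ℝ) (hC : 0 < C)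
    (ψ : (Fin d → ℝ) → ℝ) (hψe : ∀ y, ψ (-y) = ψ y) (hψ0 : ∀ y, 0 ≤ ψ y)
    (hψC : ContDiff ℝ 1 ψ)
    (φ : (Fin d → ℝ) → ℝ) (hφe : ∀ y, φ (-y) = φ y) (hφ0 : ∀ y, 0 ≤ φ y)
    (hφC : ContDiff ℝ 1 φ)
    (w : Fin N → ℝ) (hw : ∀ p, 0 ≤ w p)
    (x : Fin N → ℝ → Fin d → ℝ) (v : Fin N → ℝ → Fin d → ℝ)
    (F : Fin N → ℝ → Fin d → ℝ)
    (ft : Fin N → ℝ → ℝ)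
    (hft : ∀ p t, ft p t =
      ∑ q : Fin N, w q * (ψ (x p t - x q t) * φ (v p t - v q t)))
    (hft0 : ∀ p t, 0 < ft p t)
    (G : Fin N → ℝ → Fin d → ℝ)
    (hG : ∀ p t, G p t =
      (ft p t)⁻¹ • (∑ q : Fin N, (w q * ψ (x p t - x q t)) • pgrad φ (v p t - v q t)) +
      ∑ q : Fin N, (w q * ψ (x p t - x q t) / ft q t) • pgrad φ (v p t - v q t))
    (H : Fin N → ℝ → Fin d → ℝ)
    (hH : ∀ p t, H p t =
      (ft p t)⁻¹ • (∑ q : Fin N, (w q * φ (v p t - v q t)) • pgrad ψ (x p t - x q t)) +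
      ∑ q : Fin N, (w q * φ (v p t - v q t) / ft q t) • pgrad ψ (x p t - x q t))
    (U : Fin N → ℝ → Fin d → ℝ)
    (hU : ∀ p t, U p t = ∑ q : Fin N,
      (w q * ψ (x p t - x q t)) •
        (landauA d C γ (v p t - v q t)).mulVec (G p t - G q t))
    (hx : ∀ p t, HasDerivAt (x p) (v p t) t)
    (hv : ∀ p t, HasDerivAt (v p) (F p t - U p t) t)
    (t : ℝ) :
    HasDerivAt (fun s => -∑ p : Fin N, w p * Real.log (ft p s))
      ((-∑ p : Fin N, w p * (H p t ⬝ᵥ v p t)) +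
       (-∑ p : Fin N, w p * (G p t ⬝ᵥ F p t)) +
       (∑ p : Fin N, w p * (G p t ⬝ᵥ U p t))) t ∧
    (∑ p : Fin N, w p * (G p t ⬝ᵥ U p t))
      = (1 / 2) * ∑ p : Fin N, ∑ q : Fin N,
        w p * w q * ψ (x p t - x q t) *
          ((G p t - G q t) ⬝ᵥ
            (landauA d C γ (v p t - v q t)).mulVec (G p t - G q t)) ∧
    0 ≤ ∑ p : Fin N, w p * (G p t ⬝ᵥ U p t) :=
  cpic_entropy_decomposition_general C γ hC ψ hψe hψ0 hψC φ hφe hφC w hw x v F ft hft hft0 G hG H hH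
    U hU hx hv t
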